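/- arXiv:1803.07120 — 4 statements merged into one kernel-verified Lean document; each statement's English description precedes it below -/
import Mathlib

section
/- Let G be a finite group, w ∈ F_r a word, χ a one-dimensional (degree 1) character of G with kernel K. Then the Fourier coefficient ⟨N_{w,G}, χ⟩ = (1/|G|) Σ_{g∈G} N_{w,G}(g) conj(χ(g)) equals |K|^{r-1} · ⟨N_{w,G/K}, χ̃⟩, where χ̃ is the character induced by χ on G/K. -/
open scoped BigOperators

/-- `N_{w,G}(g)`: the number of solutions in `G^r` to `w(g₁,…,g_r) = g`. -/
noncomputable def wordSolutions {r : ℕ} {G : Type*} [Group G]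
    (w : FreeGroup (Fin r)) (g : G) : ℕ :=
  Nat.card {x : Fin r → G // FreeGroup.lift x w = g}

lemma sumA {α β : Type*} [Fintype α] [Fintype β] (p : α → β) (F : β → ℂ) :
    ∑ b : β, (Nat.card {a // p a = b} : ℂ) * F b = ∑ a : α, F (p a) := by
  classical
  rw [← Fintype.sum_fiberwise p (fun a => F (p a))]
  refine Finset.sum_congr rfl fun b _ => ?_
  have : ∀ a : {a // p a = b}, F (p a.1) = F b := fun a => by rw [a.2]
  rw [Finset.sum_congr rfl (fun a _ => this a), Finset.sum_const]
  simp [Nat.card_eq_fintype_card, mul_comm]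

lemma fiber_card {G : Type*} [Group G] (K : Subgroup G) (q : G ⧸ K) :
    Nat.card {g : G // QuotientGroup.mk g = q} = Nat.card K := by
  have e : {g : G // QuotientGroup.mk g = q} ≃ K × ({q} : Set (G ⧸ K)) :=
    (Equiv.subtypeEquivProp (by ext g; simp)).trans
      (QuotientGroup.preimageMkEquivSubgroupProdSet K {q})
  rw [Nat.card_congr e, Nat.card_prod]
  simp

lemma pi_fiber_card {r : ℕ} {G : Type*} [Group G] (K : Subgroup G) (y : Fin r → G ⧸ K) :
    Nat.card {x : Fin r → G // (fun i => (QuotientGroup.mk (x i) : G ⧸ K)) = y}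
      = Nat.card K ^ r := by
  have e : {x : Fin r → G // (fun i => (QuotientGroup.mk (x i) : G ⧸ K)) = y}
      ≃ ∀ i : Fin r, {g : G // QuotientGroup.mk g = y i} :=
    (Equiv.subtypeEquivProp (by ext x; exact funext_iff)).trans Equiv.subtypePiEquivPi
  rw [Nat.card_congr e, Nat.card_pi]
  simp [fiber_card]

lemma lift_mk {r : ℕ} {G : Type*} [Group G] (K : Subgroup G) [K.Normal]
    (w : FreeGroup (Fin r)) (x : Fin r → G) :
    (QuotientGroup.mk (FreeGroup.lift x w) : G ⧸ K)
      = FreeGroup.lift (fun i => (QuotientGroup.mk (x i) : G ⧸ K)) w := by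
  have : (QuotientGroup.mk' K).comp (FreeGroup.lift x)
      = FreeGroup.lift (fun i => (QuotientGroup.mk (x i) : G ⧸ K)) := by
    apply FreeGroup.ext_hom; intro a; simp
  exact DFunLike.congr_fun this w

/-- For a one-dimensional character `χ : G →* ℂˣ` with kernel `K`, the Fourier
coefficient `⟨N_{w,G}, χ⟩` equals `|K|^(r-1) · ⟨N_{w,G/K}, χ̃⟩`, where `χ̃` is the
character induced by `χ` on `G/K`. -/
theorem fourierCoeff_one_dim_character {r : ℕ} {G : Type*} [Group G] [Fintype G]
    (w : FreeGroup (Fin r)) (χ : G →* ℂˣ) :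
    (1 / (Fintype.card G : ℂ)) *
        ∑ g : G, (wordSolutions w g : ℂ) * (starRingEnd ℂ) (χ g : ℂ) =
      (Nat.card χ.ker : ℂ) ^ ((r : ℤ) - 1) *
        ((1 / (Nat.card (G ⧸ χ.ker) : ℂ)) *
          ∑ q : G ⧸ χ.ker,
            (wordSolutions w q : ℂ) *
              (starRingEnd ℂ) ((QuotientGroup.kerLift χ q : ℂˣ) : ℂ)) := by
  classical
  set K := χ.ker
  have h1 : ∑ g : G, (wordSolutions w g : ℂ) * (starRingEnd ℂ) (χ g : ℂ)
      = ∑ x : Fin r → G, (starRingEnd ℂ) (χ (FreeGroup.lift x w) : ℂ) :=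
    sumA (fun x : Fin r → G => FreeGroup.lift x w)
      (fun g => (starRingEnd ℂ) (χ g : ℂ))
  have h2 : ∑ q : G ⧸ K, (wordSolutions w q : ℂ)
        * (starRingEnd ℂ) ((QuotientGroup.kerLift χ q : ℂˣ) : ℂ)
      = ∑ y : Fin r → G ⧸ K, (starRingEnd ℂ)
          ((QuotientGroup.kerLift χ (FreeGroup.lift y w) : ℂˣ) : ℂ) :=
    sumA (fun y : Fin r → G ⧸ K => FreeGroup.lift y w)
      (fun q => (starRingEnd ℂ) ((QuotientGroup.kerLift χ q : ℂˣ) : ℂ))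
  have h3 : ∑ x : Fin r → G, (starRingEnd ℂ) (χ (FreeGroup.lift x w) : ℂ)
      = (Nat.card K : ℂ) ^ r * ∑ y : Fin r → G ⧸ K, (starRingEnd ℂ)
          ((QuotientGroup.kerLift χ (FreeGroup.lift y w) : ℂˣ) : ℂ) := by
    have key : ∀ x : Fin r → G, (starRingEnd ℂ) (χ (FreeGroup.lift x w) : ℂ)
        = (starRingEnd ℂ) ((QuotientGroup.kerLift χ
            (FreeGroup.lift (fun i => (QuotientGroup.mk (x i) : G ⧸ K)) w) : ℂˣ) : ℂ) :=
      fun x => by rw [← lift_mk K w x, QuotientGroup.kerLift_mk]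
    rw [Finset.sum_congr rfl (fun x _ => key x),
      ← sumA (fun x : Fin r → G => fun i => (QuotientGroup.mk (x i) : G ⧸ K))
        (fun y => (starRingEnd ℂ)
          ((QuotientGroup.kerLift χ (FreeGroup.lift y w) : ℂˣ) : ℂ)),
      Finset.mul_sum]
    refine Finset.sum_congr rfl fun y _ => ?_
    rw [pi_fiber_card]
    push_cast
    ring
  rw [h1, h2, h3]
  have hK : (Nat.card K : ℂ) ≠ 0 := by
    exact_mod_cast Nat.card_pos.ne'
  have hQ : (Nat.card (G ⧸ K) : ℂ) ≠ 0 := by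
    exact_mod_cast Nat.card_pos.ne'
  have hG : (Fintype.card G : ℂ) = (Nat.card (G ⧸ K) : ℂ) * (Nat.card K : ℂ) := by
    rw [← Nat.card_eq_fintype_card]
    exact_mod_cast Subgroup.card_eq_card_quotient_mul_card_subgroup K
  rw [zpow_sub₀ hK, zpow_natCast, zpow_one, hG]
  have alg : ∀ S : ℂ, 1 / ((Nat.card (G ⧸ K) : ℂ) * (Nat.card K : ℂ))
        * ((Nat.card K : ℂ) ^ r * S)
      = (Nat.card K : ℂ) ^ r / (Nat.card K : ℂ)
        * (1 / (Nat.card (G ⧸ K) : ℂ) * S) := by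
    intro S
    field_simp
  exact alg _
end

section
/- Let G be a finite group, g, h ∈ G generating the same cyclic subgroup, and suppose there exists a normal subgroup N ⊴ G such that the coset gN is contained in the Aut(G)-orbit of g, the coset hN is contained in the Aut(G)-orbit of h, and for every word w and all elements x, y of G/N generating the same cyclic subgroup one has N_{w,G/N}(x) = N_{w,G/N}(y). Then N_{w,G}(g) = N_{w,G}(h) for every word w. -/
open scoped Pointwise

/-! Count the tuples `x ∈ G^r` with `w(x) ∈ gN` in two ways. Every element of `gN` is an
automorphic image of `g`, so it has `N_{w,G}(g)` solutions, and the count is `|N| · N_{w,G}(g)`.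
On the other hand `w(x) ∈ gN` means `w(x̄) = ḡ` in `G/N`, and every tuple over `G/N` has `|N|^r`
lifts, so the count is also `|N|^r · N_{w,G/N}(ḡ)`. As `ḡ` and `h̄` generate the same cyclic
subgroup, the right-hand sides for `g` and `h` agree. -/

theorem FreeGroup.lift_comp_apply {ι G H F : Type*} [Group G] [Group H] [FunLike F G H]
    [MonoidHomClass F G H] (f : F) (x : ι → G) (w : FreeGroup ι) :
    FreeGroup.lift (f ∘ x) w = f (FreeGroup.lift x w) :=
  (FreeGroup.lift_unique ((f : G →* H).comp (FreeGroup.lift x)) (by simp)).symm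

theorem wordSolutions_map_mulEquiv {r : ℕ} {G H : Type*} [Group G] [Group H]
    (w : FreeGroup (Fin r)) (α : G ≃* H) (g : G) :
    wordSolutions w (α g) = wordSolutions w g :=
  Nat.card_congr <| .symm <| .subtypeEquiv (.piCongrRight fun _ => α.toEquiv) fun x => by
    change _ ↔ FreeGroup.lift (α ∘ x) w = α g
    rw [FreeGroup.lift_comp_apply, α.apply_eq_iff_eq]

theorem Nat.card_preimage_of_card_fiber {α β : Type*} [Finite α] [Finite β] {f : α → β}
    {t : Set β} {k : ℕ} (hk : ∀ b ∈ t, Nat.card {a // f a = b} = k) :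
    Nat.card (f ⁻¹' t) = Nat.card t * k := by
  have := Finset.card_preimage_eq_sum_card_image_eq (f := f) (s := t.toFinite.toFinset)
    fun b _ => Set.toFinite _
  rw [Set.Finite.coe_toFinset, Finset.sum_congr rfl fun b hb => hk b (by simpa using hb),
    Finset.sum_const, smul_eq_mul] at this
  rw [this, Nat.card_eq_card_finite_toFinset]

theorem QuotientGroup.card_fiber_comp_mk {ι G : Type*} [Fintype ι] [Group G] (N : Subgroup G)
    (z : ι → G ⧸ N) :
    Nat.card {x : ι → G // (fun i => (x i : G ⧸ N)) = z} = Nat.card N ^ Fintype.card ι := by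
  have e : {x : ι → G // (fun i => (x i : G ⧸ N)) = z} ≃ ∀ i, {a : G // (a : G ⧸ N) = z i} :=
    (Equiv.subtypeEquivRight fun _ => funext_iff).trans
      (Equiv.subtypePiEquivPi (p := fun i (a : G) => (a : G ⧸ N) = z i))
  have hfiber (q : G ⧸ N) : Nat.card {a : G // (a : G ⧸ N) = q} = Nat.card N := by
    have := QuotientGroup.card_preimage_mk N {q}
    rwa [Nat.card_unique (α := ({q} : Set (G ⧸ N))), mul_one] at this
  simp [Nat.card_congr e, Nat.card_pi, hfiber]

section
variable {G : Type*} [Group G] {r : ℕ} (w : FreeGroup (Fin r))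

theorem card_lift_mem_of_subset_orbit [Finite G] {g : G} {s : Set G}
    (hs : s ⊆ {y | ∃ α : G ≃* G, α g = y}) :
    Nat.card {x : Fin r → G // FreeGroup.lift x w ∈ s} = Nat.card s * wordSolutions w g :=
  Nat.card_preimage_of_card_fiber fun y hy => by
    obtain ⟨α, rfl⟩ := hs hy
    exact wordSolutions_map_mulEquiv w α g

theorem card_lift_mem_leftCoset [Finite G] (N : Subgroup G) [N.Normal] (g : G) :
    Nat.card {x : Fin r → G // FreeGroup.lift x w ∈ g • (N : Set G)} =
      wordSolutions w (g : G ⧸ N) * Nat.card N ^ r := by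
  have hpre : {x : Fin r → G | FreeGroup.lift x w ∈ g • (N : Set G)} =
      (fun x i => (x i : G ⧸ N)) ⁻¹' {z | FreeGroup.lift z w = (g : G ⧸ N)} := by
    ext x
    have hmk : FreeGroup.lift (fun i => (x i : G ⧸ N)) w = (FreeGroup.lift x w : G ⧸ N) :=
      FreeGroup.lift_comp_apply (QuotientGroup.mk' N) x w
    rw [Set.mem_ofPred_eq, Set.mem_preimage, Set.mem_ofPred_eq, hmk, mem_leftCoset_iff, eq_comm,
      QuotientGroup.eq, SetLike.mem_coe]
  have hfiber (z : Fin r → G ⧸ N) : Nat.card {x : Fin r → G // (fun i => (x i : G ⧸ N)) = z} =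
      Nat.card N ^ r := by
    rw [QuotientGroup.card_fiber_comp_mk, Fintype.card_fin]
  exact (congrArg (fun s : Set (Fin r → G) => Nat.card s) hpre).trans
    (Nat.card_preimage_of_card_fiber fun z _ => hfiber z)

theorem card_mul_wordSolutions_eq [Finite G] (N : Subgroup G) [N.Normal] {g : G}
    (hg : g • (N : Set G) ⊆ {y | ∃ α : G ≃* G, α g = y}) :
    Nat.card N * wordSolutions w g = Nat.card N ^ r * wordSolutions w (g : G ⧸ N) := by
  calc Nat.card N * wordSolutions w g
      = Nat.card {x : Fin r → G // FreeGroup.lift x w ∈ g • (N : Set G)} := by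
        rw [card_lift_mem_of_subset_orbit w hg, Set.natCard_smul_set, SetLike.coe_sort_coe]
    _ = Nat.card N ^ r * wordSolutions w (g : G ⧸ N) := by
        rw [card_lift_mem_leftCoset, mul_comm]

end

/-- If `g, h` generate the same cyclic subgroup, and there is a normal subgroup `N`
with `gN ⊆ O(g)`, `hN ⊆ O(h)`, and `N_{w,G/N}` constant on generators of cyclic
subgroups for every word, then `N_{w,G}(g) = N_{w,G}(h)` for every word `w`. -/
theorem wordSolutions_eq_of_quotient {G : Type*} [Group G] [Fintype G] (g h : G)
    (hgh : Subgroup.zpowers g = Subgroup.zpowers h)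
    (N : Subgroup G) [N.Normal]
    (hgN : g • (N : Set G) ⊆ {y | ∃ α : G ≃* G, α g = y})
    (hhN : h • (N : Set G) ⊆ {y | ∃ α : G ≃* G, α h = y})
    (hQ : ∀ (r : ℕ) (w : FreeGroup (Fin r)) (x y : G ⧸ N),
      Subgroup.zpowers x = Subgroup.zpowers y → wordSolutions w x = wordSolutions w y) :
    ∀ (r : ℕ) (w : FreeGroup (Fin r)), wordSolutions w g = wordSolutions w h := by
  intro r w
  have hq : Subgroup.zpowers (g : G ⧸ N) = Subgroup.zpowers (h : G ⧸ N) := by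
    simp only [← QuotientGroup.mk'_apply, ← MonoidHom.map_zpowers, hgh]
  apply Nat.eq_of_mul_eq_mul_left (Nat.card_pos (α := N))
  rw [card_mul_wordSolutions_eq w N hgN, card_mul_wordSolutions_eq w N hhN, hQ r w _ _ hq]
end

section
/- Let p ≥ 5 be a prime, k a primitive root mod p, and G = ⟨s, t | t^p = s^{p-1} = 1, s⁻¹ t s = t^k⟩ the semidirect product C_p ⋊ C_{p-1} with C_{p-1} acting faithfully. Then there is no automorphism of G sending s to s⁻¹. -/
/-- Relations for the presentation `⟨s, t | t^p = s^(p-1) = 1, s⁻¹ t s = t^k⟩`,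
with `s = of 0` and `t = of 1`. -/
def affineRels (p k : ℕ) : Set (FreeGroup (Fin 2)) :=
  {FreeGroup.of 1 ^ p, FreeGroup.of 0 ^ (p - 1),
    (FreeGroup.of 0)⁻¹ * FreeGroup.of 1 * FreeGroup.of 0 * (FreeGroup.of 1 ^ k)⁻¹}

/-!
Represent `G` in the affine group of `𝔽_p` by `s ↦ (x ↦ k⁻¹ x)` and `t ↦ (x ↦ x + 1)`.
If `α s = s⁻¹`, the image of `α t` has order dividing `p`, so its linear part, a unit of `𝔽_p`,
is trivial and it is a translation `x ↦ x + d`. Transporting `s⁻¹ t s = t^k` by `α` gives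
`k⁻¹ d = k d`, and `k² ≠ 1` because `k` has order `p - 1 > 2`; hence `d = 0`. The composite of `α`
with the representation then sends both generators, hence every element, to a linear map
`x ↦ a x`; but `α` is onto and `t` is sent to a nontrivial translation.
-/

open Multiplicative SemidirectProduct

def affineAction (R : Type*) [Ring R] : Rˣ →* MulAut (Multiplicative R) :=
  (MulAutMultiplicative R).symm.toMonoidHom.comp AddAut.mulLeft

@[simp]
lemma affineAction_apply {R : Type*} [Ring R] (u : Rˣ) (x : Multiplicative R) :
    affineAction R u x = ofAdd (u * x.toAdd) :=
  rfl

/-- `⟨ofAdd b, a⟩` stands for the affine map `x ↦ a * x + b`. -/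
abbrev AffineGroup (R : Type*) [Ring R] : Type _ :=
  Multiplicative R ⋊[affineAction R] Rˣ

lemma PresentedGroup.left_eq_one_of_generators {α : Type*} {rels : Set (FreeGroup α)}
    {N G : Type*} [Group N] [Group G] {φ : G →* MulAut N} (f : PresentedGroup rels →* N ⋊[φ] G)
    (hf : ∀ i, (f (.of i)).left = 1) (x : PresentedGroup rels) : (f x).left = 1 := by
  have : f = inr.comp (rightHom.comp f) :=
    PresentedGroup.ext fun i ↦ by ext <;> simp [hf]
  rw [this]
  rfl

lemma AffineGroup.eq_one_of_right_eq_one_of_conj_eq_pow {F : Type*} [Field F]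
    {x : AffineGroup F} {u : Fˣ} {k : ℕ} (hu : (u : F) ≠ k) (hx : x.right = 1)
    (hconj : inr u * x * (inr u)⁻¹ = x ^ k) : x = 1 := by
  obtain ⟨d, rfl⟩ : ∃ d : F, x = inl (ofAdd d) :=
    ⟨x.left.toAdd, by rw [← inl_left_mul_inr_right x, hx]; simp⟩
  rw [← map_inv, ← inl_aut, ← map_pow, inl_inj, affineAction_apply, ← ofAdd_nsmul,
    ofAdd.apply_eq_iff_eq, nsmul_eq_mul, toAdd_ofAdd] at hconj
  obtain rfl : d = 0 := by_contra fun hd ↦ hu (mul_right_cancel₀ hd hconj)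
  simp

lemma ZMod.units_eq_one_of_pow_eq_one {p : ℕ} [Fact p.Prime] {u : (ZMod p)ˣ} (hu : u ^ p = 1) :
    u = 1 :=
  Units.ext <| by rw [← ZMod.pow_card (u : ZMod p), ← Units.val_pow_eq_pow_val, hu]

lemma SemidirectProduct.right_eq_one_of_pow_eq_one {p : ℕ} [Fact p.Prime] {N : Type*} [Group N]
    {φ : (ZMod p)ˣ →* MulAut N} {x : N ⋊[φ] (ZMod p)ˣ} (hx : x ^ p = 1) : x.right = 1 :=
  ZMod.units_eq_one_of_pow_eq_one <| by rw [← rightHom_eq_right, ← map_pow, hx, map_one]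

section Presentation

variable {p k : ℕ}

lemma affineRels_of_one_pow : (PresentedGroup.of 1 : PresentedGroup (affineRels p k)) ^ p = 1 :=
  (map_pow _ _ _).symm.trans (PresentedGroup.one_of_mem (by simp [affineRels]))

lemma affineRels_conj : (PresentedGroup.of 0 : PresentedGroup (affineRels p k))⁻¹ *
    .of 1 * .of 0 = .of 1 ^ k := by
  have := PresentedGroup.mk_eq_mk_of_mul_inv_mem (rels := affineRels p k)
    (x := (FreeGroup.of 0)⁻¹ * FreeGroup.of 1 * FreeGroup.of 0) (y := FreeGroup.of 1 ^ k)
    (by simp [affineRels])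
  simp only [map_mul, map_inv, map_pow] at this
  exact this

variable [Fact p.Prime]

def affineRep (u : (ZMod p)ˣ) (hu : (u : ZMod p) = k) :
    PresentedGroup (affineRels p k) →* AffineGroup (ZMod p) :=
  PresentedGroup.toGroup (f := ![inr u⁻¹, inl (ofAdd 1)]) <| by
    simp only [affineRels, Set.mem_insert_iff, Set.mem_singleton_iff]
    rintro r (rfl | rfl | rfl) <;>
      simp only [map_mul, map_inv, map_pow, FreeGroup.lift_apply_of, Matrix.cons_val_zero,
        Matrix.cons_val_one]
    · rw [← map_pow, ← ofAdd_nsmul, nsmul_one, ZMod.natCast_self, ofAdd_zero, map_one]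
    · rw [← map_inv, ← map_pow, ZMod.units_pow_card_sub_one_eq_one, map_one]
    · rw [mul_inv_eq_one, inv_inv, ← map_inv, ← inl_aut, ← map_pow, ← ofAdd_nsmul, nsmul_one,
        ← hu, affineAction_apply, toAdd_ofAdd, mul_one]

variable (u : (ZMod p)ˣ) (hu : (u : ZMod p) = k)

@[simp]
lemma affineRep_of_zero : affineRep u hu (.of 0) = inr u⁻¹ :=
  PresentedGroup.toGroup.of _

@[simp]
lemma affineRep_of_one : affineRep u hu (.of 1) = inl (ofAdd 1) :=
  PresentedGroup.toGroup.of _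

end Presentation

/-- For a prime `p ≥ 5` and `k` a primitive root mod `p`, no automorphism of
`G = C_p ⋊ C_{p-1} = ⟨s, t | t^p = s^(p-1) = 1, s⁻¹ t s = t^k⟩` sends `s` to `s⁻¹`. -/
theorem no_aut_inverting_s {p k : ℕ} (hp : p.Prime) (hp5 : 5 ≤ p)
    (hk : orderOf (k : ZMod p) = p - 1) :
    ∀ α : PresentedGroup (affineRels p k) ≃* PresentedGroup (affineRels p k),
      α (PresentedGroup.of 0) ≠ (PresentedGroup.of 0)⁻¹ := by
  intro α hα
  have : Fact p.Prime := ⟨hp⟩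
  obtain ⟨u, hu⟩ : IsUnit (k : ZMod p) := (orderOf_pos_iff.mp (by omega)).isUnit
  have hu_inv : ((u⁻¹ : (ZMod p)ˣ) : ZMod p) ≠ k := by
    rw [← hu, Ne, Units.val_inj, inv_eq_iff_mul_eq_one, ← sq]
    exact pow_ne_one_of_lt_orderOf two_ne_zero (by rw [← orderOf_units, hu, hk]; omega)
  have hconj : .of 0 * α (.of 1) * (.of 0)⁻¹ = α (.of 1) ^ k := by
    simpa [hα] using congrArg α affineRels_conj
  have hy : affineRep u hu (α (.of 1)) = 1 :=
    AffineGroup.eq_one_of_right_eq_one_of_conj_eq_pow hu_inv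
      (right_eq_one_of_pow_eq_one <| by rw [← map_pow, ← map_pow, affineRels_of_one_pow,
        map_one, map_one])
      (by simpa using congrArg (affineRep u hu) hconj)
  have hleft := PresentedGroup.left_eq_one_of_generators ((affineRep u hu).comp α.toMonoidHom)
    fun i ↦ by fin_cases i <;> simp [hα, hy]
  simpa using hleft (α.symm (.of 1))
end

section
/- Let p ≥ 5 be a prime and G = ⟨s, t | t^p = s^{p-1} = 1, s⁻¹ t s = t^k⟩ with k a primitive root mod p. For every 0 ≤ x ≤ p−2 with x ≠ 0 or considering x with s^x ≠ 1, the set s^x⟨t⟩ (the full coset of T = ⟨t⟩) is a single conjugacy class of G, and the nonidentity elements of ⟨t⟩ form a single conjugacy class. -/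
/-!
Conjugation by `s` acts on `T = ⟨t⟩ ≅ ZMod p` as multiplication by `k`. Since `k` generates
`(ZMod p)ˣ`, every nontrivial power of `t` is conjugate to `t`; and conjugating `s ^ x` by `t ^ b`
gives `s ^ x * t ^ ((k ^ x - 1) * b)`, which runs through the whole coset `s ^ x T` because
`k ^ x ≠ 1`. Conversely `T` is normal with cyclic quotient, so conjugation preserves each coset of
`T`. That `t ≠ 1` is seen from the affine action of `G` on `ZMod p`.
-/

open scoped Pointwise

open scoped commutatorElement

open Subgroup

section Metacyclic

variable {G : Type*} [Group G] {s t : G} {k p : ℕ}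

theorem zpow_eq_zpow_of_intCast_eq (ht : t ^ p = 1) {m n : ℤ} (h : (m : ZMod p) = n) :
    t ^ m = t ^ n :=
  zpow_eq_zpow_iff_modEq.2 <| ((ZMod.intCast_eq_intCast_iff m n p).1 h).of_dvd <|
    Int.natCast_dvd_natCast.2 (orderOf_dvd_of_pow_eq_one ht)

theorem pow_inv_mul_zpow_mul_pow (h : s⁻¹ * t * s = t ^ k) (j : ℕ) (m : ℤ) :
    (s ^ j)⁻¹ * t ^ m * s ^ j = t ^ ((k : ℤ) ^ j * m) := by
  induction j generalizing m with
  | zero => simp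
  | succ j ih =>
    calc (s ^ (j + 1))⁻¹ * t ^ m * s ^ (j + 1)
        = s⁻¹ * ((s ^ j)⁻¹ * t ^ m * s ^ j) * s := by group
      _ = (s⁻¹ * t * s) ^ ((k : ℤ) ^ j * m) := by
        rw [ih]; simpa using (conj_zpow (a := s⁻¹) (b := t)).symm
      _ = t ^ ((k : ℤ) ^ (j + 1) * m) := by
        rw [h, ← zpow_natCast, ← zpow_mul, pow_succ', mul_assoc]

theorem isConj_pow_pow_mul_zpow [Fact p.Prime] (h : s⁻¹ * t * s = t ^ k) (ht : t ^ p = 1)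
    {x : ℕ} (hx : (k : ZMod p) ^ x ≠ 1) (m : ℤ) : IsConj (s ^ x) (s ^ x * t ^ m) := by
  obtain ⟨b, hb⟩ := ZMod.intCast_surjective (n := p) ((m : ZMod p) / ((k : ZMod p) ^ x - 1))
  refine isConj_iff.2 ⟨t ^ b, ?_⟩
  calc t ^ b * s ^ x * (t ^ b)⁻¹ = s ^ x * ((s ^ x)⁻¹ * t ^ b * s ^ x * t ^ (-b)) := by group
    _ = s ^ x * t ^ ((k : ℤ) ^ x * b + -b) := by
      rw [pow_inv_mul_zpow_mul_pow h, zpow_add]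
    _ = s ^ x * t ^ m := by
      refine congrArg _ (zpow_eq_zpow_of_intCast_eq ht ?_)
      push_cast
      rw [hb]
      field_simp [sub_ne_zero.2 hx]
      ring

theorem isConj_zpow [Fact p.Prime] (h : s⁻¹ * t * s = t ^ k) (ht : t ^ p = 1)
    (hk : IsPrimitiveRoot (k : ZMod p) (p - 1)) {m : ℤ} (hm : (m : ZMod p) ≠ 0) :
    IsConj t (t ^ m) := by
  have : NeZero (p - 1) := ⟨Nat.sub_ne_zero_of_lt (Fact.out : p.Prime).one_lt⟩
  obtain ⟨j, -, hj⟩ := hk.eq_pow_of_pow_eq_one (ZMod.pow_card_sub_one_eq_one hm)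
  refine isConj_iff.2 ⟨(s ^ j)⁻¹, ?_⟩
  have hconj := pow_inv_mul_zpow_mul_pow h j 1
  rw [zpow_one] at hconj
  rw [inv_inv, hconj]
  exact zpow_eq_zpow_of_intCast_eq ht (by push_cast; rw [mul_one, hj])

theorem zpowers_normal_of_closure_eq_top (hgen : closure {s, t} = ⊤) (h : s⁻¹ * t * s = t ^ k)
    (ht : IsOfFinOrder t) : (zpowers t).Normal := by
  have : Finite (zpowers t : Set G) := ht.finite_zpowers.to_subtype
  have hs : s⁻¹ ∈ normalizer (zpowers t : Set G) := mem_normalizer_fintype <| by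
    rintro _ ⟨m, rfl⟩
    rw [inv_inv, ← pow_one s, pow_inv_mul_zpow_mul_pow h]
    exact zpow_mem_zpowers _ _
  rw [← normalizer_eq_top_iff, eq_top_iff, ← hgen, closure_le]
  exact Set.pair_subset (inv_mem_iff.1 hs) (le_normalizer (mem_zpowers t))

theorem commutator_le_zpowers_of_closure_eq_top (hgen : closure {s, t} = ⊤)
    (hT : (zpowers t).Normal) : commutator G ≤ zpowers t := by
  refine Normal.commutator_le_of_self_sup_commutative_eq_top (H := zpowers s) ?_ inferInstance
  rw [eq_top_iff, ← hgen, closure_le]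
  exact Set.pair_subset (mem_sup_right (mem_zpowers s)) (mem_sup_left (mem_zpowers t))

theorem IsConj.mem_smul_of_commutator_le {N : Subgroup G} (hN : commutator G ≤ N) {a b : G}
    (h : IsConj a b) : b ∈ a • (N : Set G) := by
  obtain ⟨c, rfl⟩ := isConj_iff.1 h
  refine ⟨⁅a⁻¹, c⁆, hN (commutator_mem_commutator (mem_top _) (mem_top _)), ?_⟩
  simp only [smul_eq_mul, commutatorElement_def]
  group

end Metacyclic

namespace affineRels

variable {p k : ℕ}

theorem closure_of_pair_eq_top :
    closure {PresentedGroup.of 0, PresentedGroup.of 1} =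
      (⊤ : Subgroup (PresentedGroup (affineRels p k))) := by
  rw [← PresentedGroup.closure_range_of]
  congr 1
  ext
  simp [eq_comm]

theorem of_one_pow : (PresentedGroup.of 1 : PresentedGroup (affineRels p k)) ^ p = 1 :=
  (map_pow _ _ _).symm.trans (PresentedGroup.one_of_mem (.inl rfl))

theorem of_zero_inv_mul_of_one_mul_of_zero :
    (PresentedGroup.of 0 : PresentedGroup (affineRels p k))⁻¹ * PresentedGroup.of 1 *
      PresentedGroup.of 0 = PresentedGroup.of 1 ^ k := by
  have h := PresentedGroup.one_of_mem (rels := affineRels p k) (.inr (.inr rfl))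
  rwa [map_mul, map_inv, map_pow, mul_inv_eq_one] at h

def affinePerm [Fact p.Prime] (hk : (k : ZMod p) ≠ 0) : Fin 2 → Equiv.Perm (ZMod p) :=
  ![MulAction.toPermHom _ _ (Units.mk0 _ hk)⁻¹, Equiv.addLeft 1]

theorem lift_affinePerm_eq_one [Fact p.Prime] (hk : (k : ZMod p) ≠ 0) :
    ∀ r ∈ affineRels p k, FreeGroup.lift (affinePerm hk) r = 1 := by
  rintro _ (rfl | rfl | rfl)
  · simp [affinePerm]
  · rw [map_pow, FreeGroup.lift_apply_of]
    change MulAction.toPermHom _ _ _ ^ (p - 1) = 1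
    rw [← map_pow, inv_pow, ZMod.units_pow_card_sub_one_eq_one, inv_one, map_one]
  · ext x
    simp [affinePerm, Units.smul_def, hk]

theorem of_one_ne_one [Fact p.Prime] (hk : (k : ZMod p) ≠ 0) :
    (PresentedGroup.of 1 : PresentedGroup (affineRels p k)) ≠ 1 := by
  intro h
  simpa [affinePerm] using congrArg (PresentedGroup.toGroup (lift_affinePerm_eq_one hk) · 0) h

end affineRels

theorem conjClasses_of_affine_general {p k : ℕ} (hp : p.Prime)
    (hk : orderOf (k : ZMod p) = p - 1) :
    letI G := PresentedGroup (affineRels p k)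
    letI s : G := PresentedGroup.of 0
    letI t : G := PresentedGroup.of 1
    (∀ x : ℕ, x ≤ p - 2 → s ^ x ≠ 1 →
        (s ^ x) • ((Subgroup.zpowers t : Subgroup G) : Set G) = {y | IsConj (s ^ x) y}) ∧
      ((Subgroup.zpowers t : Subgroup G) : Set G) \ {1} = {y | IsConj t y} := by
  have : Fact p.Prime := ⟨hp⟩
  have hprim : IsPrimitiveRoot (k : ZMod p) (p - 1) := IsPrimitiveRoot.iff_orderOf.2 hk
  have hk0 : (k : ZMod p) ≠ 0 := hprim.ne_zero (Nat.sub_ne_zero_of_lt hp.one_lt)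
  have hconj := affineRels.of_zero_inv_mul_of_one_mul_of_zero (p := p) (k := k)
  have htp := affineRels.of_one_pow (p := p) (k := k)
  have hT := zpowers_normal_of_closure_eq_top affineRels.closure_of_pair_eq_top hconj
    (isOfFinOrder_iff_pow_eq_one.2 ⟨p, hp.pos, htp⟩)
  have hcomm := commutator_le_zpowers_of_closure_eq_top affineRels.closure_of_pair_eq_top hT
  refine ⟨fun x hx hsx => Set.ext fun y => ⟨?_, fun hy => hy.mem_smul_of_commutator_le hcomm⟩,
    Set.ext fun y => ⟨?_, fun hy => ⟨?_, ?_⟩⟩⟩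
  · rintro ⟨_, ⟨m, rfl⟩, rfl⟩
    have hx0 : x ≠ 0 := by rintro rfl; exact hsx (pow_zero _)
    exact isConj_pow_pow_mul_zpow hconj htp (hprim.pow_ne_one_of_pos_of_lt hx0 (by omega)) m
  · rintro ⟨⟨m, rfl⟩, hm⟩
    refine isConj_zpow hconj htp hprim fun hm0 => hm ?_
    exact (zpow_eq_zpow_of_intCast_eq htp (n := 0) (by simpa using hm0)).trans (zpow_zero _)
  · obtain ⟨g, rfl⟩ := isConj_iff.1 hy
    exact hT.conj_mem _ (mem_zpowers _) g
  · obtain ⟨g, rfl⟩ := isConj_iff.1 hy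
    exact fun h => affineRels.of_one_ne_one hk0 (conj_eq_one_iff.1 h)

/-- In `G = ⟨s, t | t^p = s^(p-1) = 1, s⁻¹ t s = t^k⟩` (`p ≥ 5` prime, `k` a
primitive root mod `p`), each coset `s^x⟨t⟩` with `s^x ≠ 1` is a single conjugacy
class, and the nonidentity elements of `⟨t⟩` form a single conjugacy class. -/
theorem conjClasses_of_affine {p k : ℕ} (hp : p.Prime) (hp5 : 5 ≤ p)
    (hk : orderOf (k : ZMod p) = p - 1) :
    letI G := PresentedGroup (affineRels p k)
    letI s : G := PresentedGroup.of 0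
    letI t : G := PresentedGroup.of 1
    (∀ x : ℕ, x ≤ p - 2 → s ^ x ≠ 1 →
        (s ^ x) • ((Subgroup.zpowers t : Subgroup G) : Set G) = {y | IsConj (s ^ x) y}) ∧
      ((Subgroup.zpowers t : Subgroup G) : Set G) \ {1} = {y | IsConj t y} :=
  conjClasses_of_affine_general hp hk
end
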